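/- For a shift-invariant probability measure P on Δ^ℤ with causal state distribution μ_C^P, the logarithm of the process dimension dim(P) is at most the logarithm of the cardinality of the support of μ_C^P (the topological statistical complexity): dim(P) ≤ |supp(μ_C^P)| when the support is finite, and log dim(P) ≤ log|supp(μ_C^P)| in general. -/

import Mathlib

open MeasureTheory ProbabilityTheory Filter Topology

variable {Δ : Type*} [Fintype Δ] [MeasurableSpace Δ] [MeasurableSingletonClass Δ]
  [TopologicalSpace Δ] [DiscreteTopology Δ]

/-- The `n`-fold one-sided shift on `Δ^ℕ`. -/
def shiftN (n : ℕ) : (ℕ → Δ) → (ℕ → Δ) := fun x k => x (k + n)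

/-- The cylinder set `[w]` in `Δ^ℕ`. -/
def cylN {n : ℕ} (w : Fin n → Δ) : Set (ℕ → Δ) := {x | ∀ i : Fin n, x (i : ℕ) = w i}

/-- The future `X_ℕ = (X_1, X_2, …)` of a two-sided trajectory. -/
def futureMap : (ℤ → Δ) → (ℕ → Δ) := fun ω n => ω ((n : ℤ) + 1)

/-- The past `(X_0, X_{-1}, …)` of a two-sided trajectory. -/
def pastMap : (ℤ → Δ) → (ℕ → Δ) := fun ω n => ω (-(n : ℤ))

/-- The σ-algebra generated by the past coordinates `X_k`, `k ≤ 0`. -/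
def pastSA (Δ : Type*) [MeasurableSpace Δ] : MeasurableSpace (ℤ → Δ) :=
  MeasurableSpace.comap pastMap MeasurableSpace.pi

/-- `P_ℕ = P ∘ X_ℕ⁻¹`. -/
noncomputable def Pnat (P : Measure (ℤ → Δ)) : Measure (ℕ → Δ) := P.map futureMap

/-- `τ_w(Q)(B) = Q([w] ∩ σ^{-n} B)`. -/
noncomputable def tauMeas (Q : Measure (ℕ → Δ)) {n : ℕ} (w : Fin n → Δ) : Measure (ℕ → Δ) :=
  (Q.restrict (cylN w)).map (shiftN n)

/-- The weak*-realization of a finite measure: the functional `f ↦ ∫ f dμ` on continuous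
functions.  The space `C(X,ℝ) → ℝ` carries the topology of pointwise convergence, so that
convergence of these functionals is exactly weak* convergence of the measures. -/
noncomputable def funcOf {X : Type*} [TopologicalSpace X] [MeasurableSpace X]
    (μ : Measure X) : C(X, ℝ) → ℝ :=
  fun f => ∫ x, f x ∂μ

/-- The canonical OOM vector space `V_P`: the span of the functionals of the measures
`τ_w(P_ℕ)` over all finite words `w` (including the empty word). -/
noncomputable def VP (P : Measure (ℤ → Δ)) : Submodule ℝ (C((ℕ → Δ), ℝ) → ℝ) :=
  Submodule.span ℝ {g | ∃ (n : ℕ) (w : Fin n → Δ), g = funcOf (tauMeas (Pnat P) w)}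

/-- A version of the conditional distribution of the future given the past. -/
noncomputable def condFuture [StandardBorelSpace Δ] (P : Measure (ℤ → Δ)) [IsFiniteMeasure P]
    (ω : ℤ → Δ) : Measure (ℕ → Δ) :=
  ((condExpKernel P (pastSA Δ)) ω).map futureMap

/-- The conditional distribution of the future, as a probability measure. -/
noncomputable def condFutureP [StandardBorelSpace Δ] (P : Measure (ℤ → Δ))
    [IsProbabilityMeasure P] (ω : ℤ → Δ) : ProbabilityMeasure (ℕ → Δ) :=
  ⟨condFuture P ω, by
    have hf : Measurable (futureMap (Δ := Δ)) :=
      measurable_pi_lambda _ fun n => measurable_pi_apply _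
    haveI : IsProbabilityMeasure ((condExpKernel P (pastSA Δ)) ω) :=
      IsMarkovKernel.isProbabilityMeasure ω
    exact Measure.isProbabilityMeasure_map hf.aemeasurable⟩

/-- The causal state distribution `μ_C^P`: the law of the conditional future distribution,
a measure on `P(Δ^ℕ)`. -/
noncomputable def causalDist [StandardBorelSpace Δ]
    [MeasurableSpace (ProbabilityMeasure (ℕ → Δ))]
    (P : Measure (ℤ → Δ)) [IsProbabilityMeasure P] : Measure (ProbabilityMeasure (ℕ → Δ)) :=
  P.map (condFutureP P)

/-- The topological support of a measure. -/
def msupport {X : Type*} [TopologicalSpace X] [MeasurableSpace X] (μ : Measure X) : Set X :=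
  {x | ∀ U : Set X, IsOpen U → x ∈ U → μ U ≠ 0}

/-!
Fix a word `w` of length `n`. By stationarity, `τ_w(P_ℕ)` is the law of the future `X_{≥1}` on
the event `{X_{1-n} ⋯ X_0 = w}`, which is measurable with respect to the past. Conditioning on the
past turns it into the integral of the causal state `ω ↦ P(X_{≥1} ∈ · | X_{≤0})(ω)` over that
event. The causal state lies almost surely in the support of `μ_C^P`; when the support is finite
the integral is a finite combination of its points, so `V_P` lies in their span. When the support
is infinite the bound holds because `V_P` has countably many generators.
-/

open TopologicalSpace in
theorem MeasureTheory.ProbabilityMeasure.borel_le_measurableSpace {Ω : Type*}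
    [MeasurableSpace Ω] [TopologicalSpace Ω] [OpensMeasurableSpace Ω]
    [SecondCountableTopology (ProbabilityMeasure Ω)] :
    borel (ProbabilityMeasure Ω) ≤ ProbabilityMeasure.instMeasurableSpace := by
  let Φ : ProbabilityMeasure Ω → (BoundedContinuousFunction Ω NNReal) → NNReal :=
    fun μ f => μ.toFiniteMeasure.testAgainstNN f
  have hΦ : IsInducing Φ :=
    (IsInducing.induced _).comp ((IsInducing.induced _).comp
      (ProbabilityMeasure.toFiniteMeasure_isEmbedding Ω).isInducing)
  have hΦ_meas : Measurable[ProbabilityMeasure.instMeasurableSpace] Φ :=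
    measurable_pi_lambda _ fun f => ENNReal.measurable_toNNReal.comp
      ((Measure.measurable_lintegral (by fun_prop)).comp measurable_subtype_coe)
  have hbasis := (isTopologicalBasis_pi fun _ => isTopologicalBasis_opens).isInducing hΦ
  refine hbasis.borel_eq_generateFrom ▸ MeasurableSpace.generateFrom_le ?_
  rintro _ ⟨_, ⟨U, F, hU, rfl⟩, rfl⟩
  exact hΦ_meas (MeasurableSet.pi F.countable_toSet fun i hi =>
    (show IsOpen (U i) from hU i hi).measurableSet)

theorem msupport_eq_support {X : Type*} [TopologicalSpace X] [MeasurableSpace X]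
    (μ : Measure X) : msupport μ = μ.support := by
  simp only [Measure.support_eq_forall_isOpen, msupport, pos_iff_ne_zero]
  ext x
  exact ⟨fun h U hx hU => h U hU hx, fun h U hU hx => h U hx hU⟩

theorem integral_comp_eq_sum_of_ae_mem {α β : Type*} [MeasurableSpace α] [MeasurableSpace β]
    [MeasurableSingletonClass β] {μ : Measure α} [IsFiniteMeasure μ] {c : α → β}
    (hc : Measurable c) {S : Finset β} (hS : ∀ᵐ a ∂μ, c a ∈ S) (g : β → ℝ) :
    ∫ a, g (c a) ∂μ = ∑ s ∈ S, μ.real (c ⁻¹' {s}) * g s := by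
  have hfiber : ∀ s, MeasurableSet (c ⁻¹' {s}) := fun s => hc (measurableSet_singleton s)
  have h_ae : (fun a => g (c a)) =ᵐ[μ]
      fun a => ∑ s ∈ S, (c ⁻¹' {s}).indicator (fun _ => g s) a := by
    filter_upwards [hS] with a ha
    rw [Finset.sum_eq_single_of_mem (f := fun s => (c ⁻¹' {s}).indicator (fun _ => g s) a)
      (c a) ha fun s _ hs => Set.indicator_of_notMem (fun h => hs (Eq.symm h)) _]
    exact (Set.indicator_of_mem rfl _).symm
  rw [integral_congr_ae h_ae,
    integral_finsetSum _ fun s _ => (integrable_const _).indicator (hfiber s)]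
  exact Finset.sum_congr rfl fun s _ => integral_indicator_const _ (hfiber s)

theorem iterate_shift_apply {α : Type*} (n : ℕ) (ω : ℤ → α) (k : ℤ) :
    (fun (x : ℤ → α) (k : ℤ) => x (k + 1))^[n] ω k = ω (k + n) := by
  induction n generalizing ω with
  | zero => simp
  | succ n ih => rw [Function.iterate_succ_apply, ih]; push_cast; ring_nf

theorem continuous_futureMap {α : Type*} [TopologicalSpace α] :
    Continuous (futureMap (Δ := α)) :=
  continuous_pi fun _ => continuous_apply _

section Trajectories

variable {α : Type*} [MeasurableSpace α]

/-- The event `{X_{1-n} ⋯ X_0 = w}`. -/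
def pastCyl {n : ℕ} (w : Fin n → α) : Set (ℤ → α) :=
  {ω | ∀ i : Fin n, ω ((i : ℤ) + 1 - n) = w i}

theorem measurable_futureMap : Measurable (futureMap (Δ := α)) :=
  measurable_pi_lambda _ fun _ => measurable_pi_apply _

theorem pastSA_le : pastSA α ≤ MeasurableSpace.pi :=
  (measurable_pi_lambda _ fun _ => measurable_pi_apply _).comap_le

theorem measurableSet_cylN [MeasurableSingletonClass α] {n : ℕ} (w : Fin n → α) :
    MeasurableSet (cylN w) := by
  simp only [cylN, Set.ofPred_forall]
  exact .iInter fun i => measurable_pi_apply _ (measurableSet_singleton _)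

theorem measurableSet_pastCyl [MeasurableSingletonClass α] {n : ℕ} (w : Fin n → α) :
    MeasurableSet[pastSA α] (pastCyl w) := by
  have : pastCyl w = pastMap ⁻¹' {x | ∀ i : Fin n, x (n - 1 - i) = w i} := by
    ext ω
    refine forall_congr' fun i => ?_
    rw [pastMap, show -((n - 1 - i : ℕ) : ℤ) = (i : ℤ) + 1 - n by omega]
  rw [this]
  refine MeasurableSpace.measurableSet_comap.mpr ⟨_, ?_, rfl⟩
  simp only [Set.ofPred_forall]
  exact .iInter fun i => measurable_pi_apply _ (measurableSet_singleton _)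

theorem integral_tauMeas_Pnat [MeasurableSingletonClass α] {P : Measure (ℤ → α)}
    (hP : MeasurePreserving (fun (x : ℤ → α) (k : ℤ) => x (k + 1)) P P)
    {n : ℕ} (w : Fin n → α) {g : (ℕ → α) → ℝ} (hg : Measurable g) :
    ∫ x, g x ∂(tauMeas (Pnat P) w) = ∫ ω in pastCyl w, g (futureMap ω) ∂P := by
  set T := (fun (x : ℤ → α) (k : ℤ) => x (k + 1))^[n]
  have hshift : ∀ ω, futureMap (T ω) = shiftN n (futureMap ω) := fun ω => by
    funext k; simp only [futureMap, shiftN, T, iterate_shift_apply]; push_cast; ring_nf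
  have hcyl : T ⁻¹' pastCyl w = futureMap ⁻¹' cylN w := by
    ext ω; refine forall_congr' fun i => ?_
    simp only [T, iterate_shift_apply, futureMap]; ring_nf
  have hT := hP.iterate n
  have hshiftN : Measurable (shiftN n : (ℕ → α) → (ℕ → α)) :=
    measurable_pi_lambda _ fun _ => measurable_pi_apply _
  rw [tauMeas, integral_map hshiftN.aemeasurable hg.aestronglyMeasurable, Pnat,
    setIntegral_map (f := fun x => g (shiftN n x)) (measurableSet_cylN w)
      (hg.comp hshiftN).aestronglyMeasurable measurable_futureMap.aemeasurable, ← hcyl, ← hT.map_eq,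
    setIntegral_map (f := fun ω => g (futureMap ω)) (pastSA_le _ (measurableSet_pastCyl w))
      (hg.comp measurable_futureMap).aestronglyMeasurable hT.measurable.aemeasurable, hT.map_eq]
  simp_rw [← hshift]
  rfl

theorem setIntegral_comp_futureMap_eq_setIntegral_condFuture [StandardBorelSpace α]
    (P : Measure (ℤ → α)) [IsFiniteMeasure P] {B : Set (ℤ → α)}
    (hB : MeasurableSet[pastSA α] B) {g : (ℕ → α) → ℝ} (hg : StronglyMeasurable g)
    (hint : Integrable (fun ω => g (futureMap ω)) P) :
    ∫ ω in B, g (futureMap ω) ∂P = ∫ ω in B, ∫ x, g x ∂(condFuture P ω) ∂P := by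
  rw [← setIntegral_condExp pastSA_le hint hB]
  refine setIntegral_congr_ae (pastSA_le _ hB) ?_
  filter_upwards [condExp_ae_eq_integral_condExpKernel pastSA_le hint] with ω hω _
  rw [hω, condFuture, integral_map measurable_futureMap.aemeasurable hg.aestronglyMeasurable]

end Trajectories

section CausalStates

variable [StandardBorelSpace Δ] [MeasurableSpace (ProbabilityMeasure (ℕ → Δ))]
  [BorelSpace (ProbabilityMeasure (ℕ → Δ))]

theorem measurable_condFutureP (P : Measure (ℤ → Δ)) [IsProbabilityMeasure P] :
    Measurable (condFutureP P) := by
  have hGiry : Measurable[_, ProbabilityMeasure.instMeasurableSpace] (condFutureP P) :=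
    ((Measure.measurable_map _ measurable_futureMap).comp
      ((condExpKernel P (pastSA Δ)).measurable.mono pastSA_le le_rfl)).subtype_mk
  exact hGiry.mono le_rfl
    (BorelSpace.measurable_eq.trans_le ProbabilityMeasure.borel_le_measurableSpace)

theorem ae_condFutureP_mem_msupport (P : Measure (ℤ → Δ)) [IsProbabilityMeasure P] :
    ∀ᵐ ω ∂P, condFutureP P ω ∈ msupport (causalDist P) := by
  refine ae_of_ae_map (measurable_condFutureP P).aemeasurable ?_
  rw [msupport_eq_support]
  exact Measure.support_mem_ae

theorem funcOf_tauMeas_mem_span_msupport (P : Measure (ℤ → Δ)) [IsProbabilityMeasure P]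
    (hP : MeasurePreserving (fun (x : ℤ → Δ) (k : ℤ) => x (k + 1)) P P)
    (hS : (msupport (causalDist P)).Finite) {n : ℕ} (w : Fin n → Δ) :
    funcOf (tauMeas (Pnat P) w) ∈ Submodule.span ℝ
      ((fun s : ProbabilityMeasure (ℕ → Δ) => funcOf (s : Measure (ℕ → Δ))) ''
        msupport (causalDist P)) := by
  let μ := P.restrict (pastCyl w)
  have hdecomp : funcOf (tauMeas (Pnat P) w) = ∑ s ∈ hS.toFinset,
      μ.real (condFutureP P ⁻¹' {s}) • funcOf (s : Measure (ℕ → Δ)) := by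
    funext f
    simp only [Finset.sum_apply, Pi.smul_apply, smul_eq_mul]
    have hint : Integrable (fun ω => f (futureMap ω)) P :=
      (f.continuous.comp continuous_futureMap).integrable_of_hasCompactSupport
        (HasCompactSupport.of_compactSpace _)
    rw [funcOf, integral_tauMeas_Pnat hP w f.continuous.measurable,
      setIntegral_comp_futureMap_eq_setIntegral_condFuture P (measurableSet_pastCyl w)
        f.continuous.stronglyMeasurable hint]
    exact integral_comp_eq_sum_of_ae_mem (measurable_condFutureP P)
      (ae_restrict_of_ae (by simpa using ae_condFutureP_mem_msupport P))
      fun s => funcOf (s : Measure (ℕ → Δ)) f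
  rw [hdecomp]
  exact Submodule.sum_mem _ fun s hs => Submodule.smul_mem _ _
    (Submodule.subset_span ⟨s, hS.mem_toFinset.mp hs, rfl⟩)

theorem rank_VP_le_of_finite (P : Measure (ℤ → Δ)) [IsProbabilityMeasure P]
    (hP : MeasurePreserving (fun (x : ℤ → Δ) (k : ℤ) => x (k + 1)) P P)
    (hS : (msupport (causalDist P)).Finite) :
    Module.rank ℝ (VP P) ≤ Cardinal.mk (msupport (causalDist P)) := by
  have hle : VP P ≤ Submodule.span ℝ
      ((fun s : ProbabilityMeasure (ℕ → Δ) => funcOf (s : Measure (ℕ → Δ))) ''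
        msupport (causalDist P)) := by
    rw [VP, Submodule.span_le]
    rintro _ ⟨n, w, rfl⟩
    exact funcOf_tauMeas_mem_span_msupport P hP hS w
  exact (Submodule.rank_mono hle).trans ((rank_span_le _).trans Cardinal.mk_image_le)

end CausalStates

theorem rank_VP_le_aleph0 {α : Type*} [MeasurableSpace α] [TopologicalSpace α] [Countable α]
    (P : Measure (ℤ → α)) : Module.rank ℝ (VP P) ≤ Cardinal.aleph0 := by
  refine (rank_span_le _).trans (Set.Countable.le_aleph0 ?_)
  refine (Set.countable_range fun p : Σ n, Fin n → α => funcOf (tauMeas (Pnat P) p.2)).mono ?_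
  rintro _ ⟨n, w, rfl⟩
  exact ⟨⟨n, w⟩, rfl⟩

/-- The process dimension `dim(P)` (the dimension of the canonical OOM vector
space `V_P`) is at most the number of causal states (the cardinality of the support of the
causal state distribution); equivalently `log dim(P)` is bounded by the topological
statistical complexity `log |supp μ_C^P|`. -/
theorem stmt11 [StandardBorelSpace Δ]
    [MeasurableSpace (ProbabilityMeasure (ℕ → Δ))] [BorelSpace (ProbabilityMeasure (ℕ → Δ))]
    (P : Measure (ℤ → Δ)) [IsProbabilityMeasure P]
    (hP : MeasurePreserving (fun (x : ℤ → Δ) (k : ℤ) => x (k + 1)) P P) :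
    Module.rank ℝ (VP P) ≤ Cardinal.mk (msupport (causalDist P)) ∧
    (Set.Finite (msupport (causalDist P)) →
      Module.rank ℝ (VP P) ≤ (msupport (causalDist P)).ncard) := by
  refine ⟨?_, fun hS => ?_⟩
  · rcases (msupport (causalDist P)).finite_or_infinite with hS | hS
    · exact rank_VP_le_of_finite P hP hS
    · exact (rank_VP_le_aleph0 P).trans (Cardinal.aleph0_le_mk_iff.mpr hS.to_subtype)
  · have : Finite (msupport (causalDist P)) := hS.to_subtype
    rw [← Nat.card_coe_set_eq, Nat.cast_card]
    exact rank_VP_le_of_finite P hP hS
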